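/- arXiv:1205.1721 — 10 statements merged into one kernel-verified Lean document; each statement's English description precedes it below -/
import Mathlib

section
/- Let n be a positive integer, let p_1, …, p_n ∈ [0,1] and let r_1, …, r_n ≥ 0 be real numbers such that for every subset S ⊆ {1, …, n} one has ∑_{i∈S} r_i ≤ 1 − ∏_{i∈S} (1 − p_i). Then there exists a probability distribution w on the permutations π of {1, …, n} (i.e. w(π) ≥ 0 for every permutation π and ∑_π w(π) = 1) such that for every index i, ∑_π w(π) · p_i · ∏_{j : π(j) < π(i)} (1 − p_j) ≥ r_i. -/
/-!
If a weight vector `y ≥ 0` is given, scanning the events in decreasing order of `y` makes every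
prefix `S` of the scan satisfy `∑_{i∈S} q_i = 1 - ∏_{i∈S} (1 - p_i)` for the first-occurrence
probabilities `q`, so Abel summation and the constraints give `∑ y r ≤ ∑ y q`. Hence `r` cannot be
separated by a hyperplane from the convex hull of the first-occurrence vectors plus the
nonpositive orthant, and it lies in that set.
-/

open Finset Pointwise

theorem Finset.mul_sum_le_sum_mul_of_antitoneOn {ι : Type*} [LinearOrder ι] (s : Finset ι)
    {y d : ι → ℝ} {c : ℝ} (hy : AntitoneOn y s) (hc : ∀ i ∈ s, c ≤ y i)
    (hd : ∀ k ∈ s, 0 ≤ ∑ i ∈ s with i ≤ k, d i) :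
    c * ∑ i ∈ s, d i ≤ ∑ i ∈ s, y i * d i := by
  classical
  induction s using Finset.induction_on_max generalizing c with
  | empty => simp
  | insert a s hlt ih =>
    have ha : a ∉ s := fun h => lt_irrefl a (hlt a h)
    have hya : ∀ i ∈ s, y a ≤ y i := fun i hi =>
      hy (mem_insert_of_mem hi) (mem_insert_self a s) (hlt i hi).le
    have hds : ∀ k ∈ s, 0 ≤ ∑ i ∈ s with i ≤ k, d i := by
      intro k hk
      have := hd k (mem_insert_of_mem hk)
      rwa [filter_insert, if_neg (hlt k hk).not_ge] at this
    have hIH := ih (hy.mono (subset_insert a s)) hya hds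
    have htotal : 0 ≤ d a + ∑ i ∈ s, d i := by
      have := hd a (mem_insert_self a s)
      rwa [filter_true_of_mem fun i hi => ?_, sum_insert ha] at this
      rcases mem_insert.1 hi with rfl | hi
      exacts [le_rfl, (hlt i hi).le]
    rw [sum_insert ha, sum_insert ha]
    calc c * (d a + ∑ i ∈ s, d i) ≤ y a * (d a + ∑ i ∈ s, d i) :=
          mul_le_mul_of_nonneg_right (hc a (mem_insert_self a s)) htotal
      _ ≤ y a * d a + ∑ i ∈ s, y i * d i := by linarith

section FirstOccurrence

variable {n : ℕ} (p : Fin n → ℝ)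

/-- `π i` is the position of event `i` in the scan. -/
def firstOccurrenceProb (π : Equiv.Perm (Fin n)) (i : Fin n) : ℝ :=
  p i * ∏ j ∈ univ.filter (fun j => π j < π i), (1 - p j)

theorem firstOccurrenceProb_symm_apply_apply (σ : Equiv.Perm (Fin n)) (k : Fin n) :
    firstOccurrenceProb p σ.symm (σ k) = p (σ k) * ∏ l ∈ Iio k, (1 - p (σ l)) := by
  rw [firstOccurrenceProb, Equiv.symm_apply_apply]
  congr 1
  exact prod_equiv σ.symm (by simp) (by simp)

theorem sum_firstOccurrenceProb_symm_Iic (σ : Equiv.Perm (Fin n)) (m : Fin n) :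
    ∑ k ∈ Iic m, firstOccurrenceProb p σ.symm (σ k) = 1 - ∏ k ∈ Iic m, (1 - p (σ k)) := by
  rw [prod_one_sub_ordered, sub_sub_cancel]
  refine sum_congr rfl fun k hk => ?_
  rw [firstOccurrenceProb_symm_apply_apply]
  congr 2
  ext l
  simp only [mem_Iio, mem_filter, mem_Iic, iff_and_self]
  exact fun hl => hl.le.trans (mem_Iic.1 hk)

end FirstOccurrence

theorem exists_perm_sum_mul_le_sum_mul_firstOccurrenceProb {n : ℕ} {p r : Fin n → ℝ}
    (hcon : ∀ S : Finset (Fin n), ∑ i ∈ S, r i ≤ 1 - ∏ i ∈ S, (1 - p i))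
    (y : Fin n → ℝ) (hy : 0 ≤ y) :
    ∃ π : Equiv.Perm (Fin n), ∑ i, y i * r i ≤ ∑ i, y i * firstOccurrenceProb p π i := by
  set σ := Tuple.sort (OrderDual.toDual ∘ y)
  have hσ : Antitone (y ∘ σ) := monotone_toDual_comp_iff.1 (Tuple.monotone_sort _)
  have hprefix : ∀ m, 0 ≤ ∑ k ∈ univ with k ≤ m, (firstOccurrenceProb p σ.symm (σ k) - r (σ k)) := by
    intro m
    have := hcon ((Iic m).map σ.toEmbedding)
    rw [sum_map, prod_map] at this
    rw [filter_ge_eq_Iic, sum_sub_distrib, sum_firstOccurrenceProb_symm_Iic]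
    simpa using this
  refine ⟨σ.symm, sub_nonneg.1 ?_⟩
  rw [← sum_sub_distrib, ← Equiv.sum_comp σ]
  simpa [← mul_sub] using mul_sum_le_sum_mul_of_antitoneOn univ (c := 0)
    (hσ.antitoneOn _) (fun i _ => hy (σ i)) fun m _ => hprefix m

theorem exists_mem_stdSimplex_le_sum_smul {A ι : Type*} [Fintype A] [Fintype ι]
    (q : A → ι → ℝ) (r : ι → ℝ)
    (h : ∀ y : ι → ℝ, 0 ≤ y → ∃ a, ∑ i, y i * r i ≤ ∑ i, y i * q a i) :
    ∃ w ∈ stdSimplex ℝ A, r ≤ ∑ a, w a • q a := by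
  classical
  set T := Fintype.linearCombination ℝ q
  set K := T '' stdSimplex ℝ A + Set.Iic (0 : ι → ℝ)
  suffices hrK : r ∈ K by
    obtain ⟨_, ⟨w, hw, rfl⟩, c, hc, hr⟩ := hrK
    refine ⟨w, hw, ?_⟩
    rw [← hr, ← Fintype.linearCombination_apply]
    exact add_le_of_nonpos_right hc
  have hK_closed : IsClosed K := isClosed_Iic.add_left_of_isCompact
    ((isCompact_stdSimplex ℝ A).image T.continuous_of_finiteDimensional)
  have hK_convex : Convex ℝ K := ((convex_stdSimplex ℝ A).linear_image T).add (convex_Iic 0)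
  by_contra hrK
  obtain ⟨f, u, hfK, hur⟩ := geometric_hahn_banach_closed_point hK_convex hK_closed hrK
  set e : ι → ι → ℝ := fun i j => if i = j then 1 else 0
  set y : ι → ℝ := fun i => f (e i)
  have hf : ∀ v, f v = ∑ i, y i * v i := fun v => by
    simpa [mul_comm] using LinearMap.pi_apply_eq_sum_univ f.toLinearMap v
  have hqK : ∀ a, ∀ c ≤ 0, q a + c ∈ K := fun a c hc =>
    Set.add_mem_add ⟨Pi.single a 1, single_mem_stdSimplex ℝ a, by simp [T]⟩ hc
  have hy : 0 ≤ y := by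
    obtain ⟨a, -⟩ := h 0 le_rfl
    intro i
    by_contra! hyi
    rw [Pi.zero_apply] at hyi
    have hgap : 0 < u - f (q a) := by simpa using hfK _ (hqK a 0 le_rfl)
    -- `t` is chosen so that `f (q a - t • e i) = u`, impossible on `K`.
    set t := (u - f (q a)) / -y i
    have ht : 0 ≤ t := div_nonneg hgap.le (by linarith)
    have hc : -t • e i ≤ 0 := fun j => by
      by_cases hij : i = j <;> simp [e, hij, ht]
    have := hfK _ (hqK a _ hc)
    rw [map_add, map_smul, smul_eq_mul] at this
    have : t * -y i = u - f (q a) := div_mul_cancel₀ _ (by linarith)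
    linarith
  obtain ⟨a, ha⟩ := h y hy
  have := hfK _ (hqK a 0 le_rfl)
  rw [add_zero, hf] at this
  rw [hf] at hur
  linarith

theorem stmt_0_general (n : ℕ) (p r : Fin n → ℝ)
    (hcon : ∀ S : Finset (Fin n), ∑ i ∈ S, r i ≤ 1 - ∏ i ∈ S, (1 - p i)) :
    ∃ w : Equiv.Perm (Fin n) → ℝ,
      (∀ π, 0 ≤ w π) ∧ (∑ π : Equiv.Perm (Fin n), w π = 1) ∧
      ∀ i : Fin n,
        r i ≤ ∑ π : Equiv.Perm (Fin n),
          w π * (p i * ∏ j ∈ Finset.univ.filter (fun j => π j < π i), (1 - p j)) := by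
  obtain ⟨w, hw, hrw⟩ := exists_mem_stdSimplex_le_sum_smul (firstOccurrenceProb p) r
    (exists_perm_sum_mul_le_sum_mul_firstOccurrenceProb hcon)
  refine ⟨w, hw.1, hw.2, fun i => ?_⟩
  simpa [firstOccurrenceProb] using hrw i

/-- **Sampling lemma (Lemma 1).** If the targets `r i` satisfy
`∑_{i∈S} r i ≤ 1 - ∏_{i∈S} (1 - p i)` for every subset `S`, then there is a
probability distribution on permutations such that each event `i` is the
earliest occurring one with probability at least `r i`. -/
theorem stmt_0 (n : ℕ) (hn : 0 < n) (p r : Fin n → ℝ)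
    (hp : ∀ i, p i ∈ Set.Icc (0 : ℝ) 1) (hr : ∀ i, 0 ≤ r i)
    (hcon : ∀ S : Finset (Fin n), ∑ i ∈ S, r i ≤ 1 - ∏ i ∈ S, (1 - p i)) :
    ∃ w : Equiv.Perm (Fin n) → ℝ,
      (∀ π, 0 ≤ w π) ∧ (∑ π : Equiv.Perm (Fin n), w π = 1) ∧
      ∀ i : Fin n,
        r i ≤ ∑ π : Equiv.Perm (Fin n),
          w π * (p i * ∏ j ∈ Finset.univ.filter (fun j => π j < π i), (1 - p j)) :=
  stmt_0_general n p r hcon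
end

section
/- Let n be a positive integer, let p_1, …, p_n ∈ [0,1] be real numbers, and let w be any probability distribution on the permutations π of {1, …, n} (i.e. w(π) ≥ 0 and ∑_π w(π) = 1). Then for every subset S ⊆ {1, …, n}, ∑_{i∈S} ∑_π w(π) · p_i · ∏_{j : π(j) < π(i)} (1 − p_j) ≤ 1 − ∏_{i∈S} (1 − p_i). -/
/-!
Fix a permutation `π` and list the events of `S` in the order `π`. The probability that the
first occurring event of `S` is `i` is `p i` times the product of `1 - p j` over the events of
`S` before `i`, and these telescope to `1 - ∏_{i ∈ S} (1 - p i)`. The left-hand side only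
enlarges the product to all events before `i`, which can only decrease it, and averaging over
`π` preserves the bound.
-/

open Finset

namespace Finset

variable {ι α R : Type*} [DecidableEq ι] [LinearOrder α] [CommRing R]

theorem sum_mul_prod_filter_lt_eq_one_sub_prod {f : ι → α} (hf : Function.Injective f)
    (p : ι → R) (S : Finset ι) :
    ∑ i ∈ S, p i * ∏ j ∈ S.filter (fun j => f j < f i), (1 - p j)
      = 1 - ∏ i ∈ S, (1 - p i) := by
  induction S using Finset.induction_on_max_value f with
  | empty => simp
  | insert a s ha hmax ih =>
    have hlt : ∀ x ∈ s, f x < f a := fun x hx =>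
      (hmax x hx).lt_of_ne fun h => ha (hf h ▸ hx)
    have hfilter_a : (insert a s).filter (fun j => f j < f a) = s := by
      rw [filter_insert, if_neg (lt_irrefl _), filter_true_of_mem hlt]
    have hfilter_s : ∀ i ∈ s, (insert a s).filter (fun j => f j < f i)
        = s.filter (fun j => f j < f i) := fun i hi => by
      rw [filter_insert, if_neg (hmax i hi).not_gt]
    rw [sum_insert ha, hfilter_a, sum_congr rfl fun i hi => by rw [hfilter_s i hi], ih,
      prod_insert ha]
    ring

theorem sum_mul_prod_lt_le_one_sub_prod [Fintype ι] {f : ι → α} (hf : Function.Injective f)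
    {p : ι → ℝ} (hp : ∀ i, p i ∈ Set.Icc (0 : ℝ) 1) (S : Finset ι) :
    ∑ i ∈ S, p i * ∏ j ∈ univ.filter (fun j => f j < f i), (1 - p j)
      ≤ 1 - ∏ i ∈ S, (1 - p i) := by
  rw [← sum_mul_prod_filter_lt_eq_one_sub_prod hf p S]
  refine sum_le_sum fun i _ => mul_le_mul_of_nonneg_left ?_ (hp i).1
  exact prod_le_prod_of_subset_of_le_one (filter_subset_filter _ (subset_univ S))
    (fun j _ => sub_nonneg.2 (hp j).2) (fun j _ _ => sub_le_self _ (hp j).1)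

end Finset

theorem stmt_1_general (n : ℕ) (p : Fin n → ℝ)
    (hp : ∀ i, p i ∈ Set.Icc (0 : ℝ) 1)
    (w : Equiv.Perm (Fin n) → ℝ) (hw : ∀ π, 0 ≤ w π)
    (hw1 : ∑ π : Equiv.Perm (Fin n), w π = 1) :
    ∀ S : Finset (Fin n),
      ∑ i ∈ S, ∑ π : Equiv.Perm (Fin n),
          w π * (p i * ∏ j ∈ Finset.univ.filter (fun j => π j < π i), (1 - p j))
        ≤ 1 - ∏ i ∈ S, (1 - p i) := by
  intro S
  calc ∑ i ∈ S, ∑ π : Equiv.Perm (Fin n),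
          w π * (p i * ∏ j ∈ univ.filter (fun j => π j < π i), (1 - p j))
      = ∑ π : Equiv.Perm (Fin n),
          w π * ∑ i ∈ S, p i * ∏ j ∈ univ.filter (fun j => π j < π i), (1 - p j) := by
        rw [sum_comm]
        simp only [mul_sum]
    _ ≤ ∑ π : Equiv.Perm (Fin n), w π * (1 - ∏ i ∈ S, (1 - p i)) :=
        sum_le_sum fun π _ => mul_le_mul_of_nonneg_left
          (sum_mul_prod_lt_le_one_sub_prod π.injective hp S) (hw π)
    _ = 1 - ∏ i ∈ S, (1 - p i) := by rw [← sum_mul, hw1, one_mul]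

/-- Necessity direction of the sampling lemma: for any probability distribution
on permutations, the probability that the earliest occurring event lies in `S`
is at most the probability that at least one event of `S` occurs. -/
theorem stmt_1 (n : ℕ) (hn : 0 < n) (p : Fin n → ℝ)
    (hp : ∀ i, p i ∈ Set.Icc (0 : ℝ) 1)
    (w : Equiv.Perm (Fin n) → ℝ) (hw : ∀ π, 0 ≤ w π)
    (hw1 : ∑ π : Equiv.Perm (Fin n), w π = 1) :
    ∀ S : Finset (Fin n),
      ∑ i ∈ S, ∑ π : Equiv.Perm (Fin n),
          w π * (p i * ∏ j ∈ Finset.univ.filter (fun j => π j < π i), (1 - p j))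
        ≤ 1 - ∏ i ∈ S, (1 - p i) :=
  stmt_1_general n p hp w hw hw1
end

section
/- Let n be a positive integer and let p_1, …, p_n ∈ [0,1] be real numbers. Then for every subset S ⊆ {1, …, n}, ∑_{i∈S} p_i · ∏_{j < i} (1 − p_j) ≤ 1 − ∏_{i∈S} (1 − p_i), where the inner product is over all indices j (in {1, …, n}) with j < i. -/
/-!
Expanding `∏ i ∈ S, (1 - p i)` along the order of the indices gives
`1 - ∑ i ∈ S, p i * ∏ j ∈ S with j < i, (1 - p j)` (`Finset.prod_one_sub_ordered`). Since every
factor `1 - p j` lies in `[0, 1]`, extending each inner product from `S` to all `j < i` can only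
decrease it.
-/

open Finset

theorem Finset.sum_mul_prod_one_sub_lt_le_one_sub_prod {ι R : Type*} [LinearOrder ι] [Fintype ι]
    [CommRing R] [PartialOrder R] [IsOrderedRing R] {p : ι → R}
    (hp0 : ∀ i, 0 ≤ p i) (hp1 : ∀ i, p i ≤ 1) (S : Finset ι) :
    ∑ i ∈ S, p i * ∏ j with j < i, (1 - p j) ≤ 1 - ∏ i ∈ S, (1 - p i) := by
  rw [prod_one_sub_ordered, sub_sub_cancel]
  refine sum_le_sum fun i _ => mul_le_mul_of_nonneg_left ?_ (hp0 i)
  exact prod_anti_set_of_le_one (fun j => sub_nonneg.2 (hp1 j)) (fun j => sub_le_self _ (hp0 j))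
    (filter_subset_filter _ (subset_univ S))

theorem stmt_2_general (n : ℕ) (p : Fin n → ℝ)
    (hp : ∀ i, p i ∈ Set.Icc (0 : ℝ) 1) :
    ∀ S : Finset (Fin n),
      ∑ i ∈ S, p i * ∏ j ∈ Finset.univ.filter (fun j => j < i), (1 - p j)
        ≤ 1 - ∏ i ∈ S, (1 - p i) :=
  sum_mul_prod_one_sub_lt_le_one_sub_prod (fun i => (hp i).1) (fun i => (hp i).2)

/-- Deterministic (single-permutation) core of the necessity direction: when
events are examined in the order `1, 2, …, n`, the probability that the
earliest occurring event lies in `S` is at most the probability that at least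
one event of `S` occurs. -/
theorem stmt_2 (n : ℕ) (hn : 0 < n) (p : Fin n → ℝ)
    (hp : ∀ i, p i ∈ Set.Icc (0 : ℝ) 1) :
    ∀ S : Finset (Fin n),
      ∑ i ∈ S, p i * ∏ j ∈ Finset.univ.filter (fun j => j < i), (1 - p j)
        ≤ 1 - ∏ i ∈ S, (1 - p i) :=
  stmt_2_general n p hp
end

section
/- Let n be a positive integer, let p_1, …, p_n ∈ [0,1] and r_1, …, r_n ≥ 0 be real numbers satisfying, for every k ∈ {1, …, n}, the prefix constraint ∑_{i=1}^{k} r_i ≤ 1 − ∏_{j=1}^{k} (1 − p_j). Then for every sequence of real numbers x_1 ≥ x_2 ≥ … ≥ x_n ≥ 0 one has ∑_{k=1}^{n} x_k r_k ≤ ∑_{i=1}^{n} x_i p_i ∏_{j=1}^{i-1} (1 − p_j). -/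
/-!
Abel summation: writing the decreasing weights as `x i = (x i - x m) + x m`, with `m` the last
index, reduces the claim to the same claim for the shorter sequence `x i - x m` plus `x m` times
the constraint on the full prefix. The prefix constraint is exactly this comparison of prefix
sums, because `1 - ∏ j ≤ k, (1 - p j)` is the `k`-th prefix sum of the probabilities
`p i * ∏ j < i, (1 - p j)` that event `i` is the first to occur.
-/

open Finset

variable {ι : Type*} [LinearOrder ι]

theorem Finset.sum_mul_prod_one_sub_eq_one_sub_prod {R : Type*} [CommRing R]
    (s : Finset ι) (p : ι → R) :
    ∑ i ∈ s, p i * ∏ j ∈ s with j < i, (1 - p j) = 1 - ∏ j ∈ s, (1 - p j) := by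
  induction s using Finset.induction_on_max with
  | empty => simp
  | insert m s hlt ih =>
    have hm : m ∉ s := fun h => lt_irrefl m (hlt m h)
    have hbefore_m : (insert m s).filter (· < m) = s := by
      rw [filter_insert, if_neg (lt_irrefl m), filter_true_of_mem hlt]
    have hbefore : ∀ i ∈ s, (insert m s).filter (· < i) = s.filter (· < i) := fun i hi => by
      rw [filter_insert, if_neg (hlt i hi).not_gt]
    rw [sum_insert hm, prod_insert hm, hbefore_m, sum_congr rfl fun i hi => by rw [hbefore i hi],
      ih]
    ring

theorem Finset.sum_mul_le_sum_mul_of_prefix_sum_le {s : Finset ι} {a b x : ι → ℝ}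
    (hab : ∀ k ∈ s, ∑ i ∈ s with i ≤ k, a i ≤ ∑ i ∈ s with i ≤ k, b i)
    (hx : AntitoneOn x s) (hx0 : ∀ i ∈ s, 0 ≤ x i) :
    ∑ i ∈ s, x i * a i ≤ ∑ i ∈ s, x i * b i := by
  induction s using Finset.induction_on_max generalizing x with
  | empty => simp
  | insert m s hlt ih =>
    have hm : m ∉ s := fun h => lt_irrefl m (hlt m h)
    have hsplit : ∀ f : ι → ℝ, ∑ i ∈ insert m s, x i * f i
        = ∑ i ∈ s, (x i - x m) * f i + x m * ∑ i ∈ insert m s, f i := fun f => by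
      simp only [sum_insert hm, sub_mul, sum_sub_distrib, mul_add, mul_sum]
      ring
    have hprefix : ∀ k ∈ s, (insert m s).filter (· ≤ k) = s.filter (· ≤ k) := fun k hk => by
      rw [filter_insert, if_neg (hlt k hk).not_ge]
    have hshort : ∑ i ∈ s, (x i - x m) * a i ≤ ∑ i ∈ s, (x i - x m) * b i := by
      refine ih (fun k hk => ?_) (fun i hi j hj hij => ?_) (fun i hi => ?_)
      · simpa only [hprefix k hk] using hab k (mem_insert_of_mem hk)
      · exact sub_le_sub_right (hx (mem_insert_of_mem hi) (mem_insert_of_mem hj) hij) _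
      · exact sub_nonneg.2 (hx (mem_insert_of_mem hi) (mem_insert_self m s) (hlt i hi).le)
    have hfull : ∑ i ∈ insert m s, a i ≤ ∑ i ∈ insert m s, b i := by
      have hall : (insert m s).filter (· ≤ m) = insert m s :=
        filter_true_of_mem fun i hi => (mem_insert.1 hi).elim le_of_eq fun h => (hlt i h).le
      simpa only [hall] using hab m (mem_insert_self m s)
    rw [hsplit a, hsplit b]
    exact add_le_add hshort (mul_le_mul_of_nonneg_left hfull (hx0 m (mem_insert_self m s)))

theorem stmt_3_general (n : ℕ) (p r x : Fin n → ℝ)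
    (hpre : ∀ k : Fin n,
      ∑ i ∈ Finset.univ.filter (fun i => i ≤ k), r i
        ≤ 1 - ∏ j ∈ Finset.univ.filter (fun j => j ≤ k), (1 - p j))
    (hxmono : ∀ i j : Fin n, i ≤ j → x j ≤ x i) (hxnonneg : ∀ i, 0 ≤ x i) :
    ∑ k, x k * r k
      ≤ ∑ i, x i * p i * ∏ j ∈ Finset.univ.filter (fun j => j < i), (1 - p j) := by
  have hfirst : ∀ k : Fin n, 1 - ∏ j with j ≤ k, (1 - p j)
      = ∑ i with i ≤ k, p i * ∏ j with j < i, (1 - p j) := fun k => by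
    rw [← sum_mul_prod_one_sub_eq_one_sub_prod]
    refine sum_congr rfl fun i hi => ?_
    rw [filter_filter, filter_congr fun j _ =>
      and_iff_right_of_imp fun hji => hji.le.trans (mem_filter.1 hi).2]
  simp only [mul_assoc]
  exact sum_mul_le_sum_mul_of_prefix_sum_le (fun k _ => (hpre k).trans_eq (hfirst k))
    (fun i _ j _ hij => hxmono i j hij) fun i _ => hxnonneg i

/-- Key inequality in the LP proof of the sampling lemma: under the prefix
feasibility constraints, for nonnegative weights `x` sorted in decreasing
order, the value of the identity permutation dominates the weighted sum of the
targets. -/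
theorem stmt_3 (n : ℕ) (hn : 0 < n) (p r x : Fin n → ℝ)
    (hp : ∀ i, p i ∈ Set.Icc (0 : ℝ) 1) (hr : ∀ i, 0 ≤ r i)
    (hpre : ∀ k : Fin n,
      ∑ i ∈ Finset.univ.filter (fun i => i ≤ k), r i
        ≤ 1 - ∏ j ∈ Finset.univ.filter (fun j => j ≤ k), (1 - p j))
    (hxmono : ∀ i j : Fin n, i ≤ j → x j ≤ x i) (hxnonneg : ∀ i, 0 ≤ x i) :
    ∑ k, x k * r k
      ≤ ∑ i, x i * p i * ∏ j ∈ Finset.univ.filter (fun j => j < i), (1 - p j) :=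
  stmt_3_general n p r x hpre hxmono hxnonneg
end

section
/- Let n be a positive integer and let x_1, …, x_n and p_1, …, p_n be arbitrary real numbers. Then ∑_{i=1}^{n} x_i p_i ∏_{j=1}^{i-1} (1 − p_j) = ∑_{S ⊆ {1,…,n}, S ≠ ∅} (−1)^{|S|−1} x_{max(S)} ∏_{i∈S} p_i, where max(S) denotes the largest element of S. -/
/-!
Group the nonempty subsets `S` of `{1, …, n}` by their maximum `i`: they are the sets
`insert i T` with `T ⊆ {1, …, i - 1}`, and summing `(-1) ^ #T * ∏ j ∈ T, p j` over these `T`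
is the expansion of `∏ j ∈ Icc 1 (i - 1), (1 - p j)`.
-/

open Finset

namespace Finset

variable {α β : Type*} [LinearOrder α]

theorem max'_insert_of_forall_lt {a : α} {s : Finset α} (h : ∀ b ∈ s, b < a) :
    (insert a s).max' (insert_nonempty a s) = a :=
  (max'_eq_iff _ _ a).2 ⟨mem_insert_self a s, by simpa using fun b hb => (h b hb).le⟩

theorem sum_attach_nonempty_powerset_eq_sum_max' [AddCommMonoid β] (s : Finset α)
    (f : Finset α → α → β) :
    ∑ S ∈ (s.powerset.filter fun S => S.Nonempty).attach, f S.1 (S.1.max' (mem_filter.mp S.2).2)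
      = ∑ i ∈ s, ∑ T ∈ (s.filter (· < i)).powerset, f (insert i T) i := by
  rw [sum_sigma']
  refine sum_bij'
    (fun S _ => ⟨S.1.max' (mem_filter.mp S.2).2, S.1.erase (S.1.max' (mem_filter.mp S.2).2)⟩)
    (fun a ha => ⟨insert a.1 a.2, ?_⟩) ?_ ?_ ?_ ?_ ?_
  · simp only [mem_sigma, mem_powerset] at ha
    exact mem_filter.2 ⟨mem_powerset.2 (insert_subset ha.1 (ha.2.trans (filter_subset _ _))),
      insert_nonempty _ _⟩
  · rintro ⟨S, hS⟩ -
    obtain ⟨hSs, hne⟩ := mem_filter.mp hS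
    simp only [mem_sigma, mem_powerset]
    exact ⟨mem_powerset.1 hSs (max'_mem S hne), fun b hb => mem_filter.2
      ⟨mem_powerset.1 hSs (mem_of_mem_erase hb), lt_max'_of_mem_erase_max' S hne hb⟩⟩
  · simp
  · rintro ⟨S, hS⟩ -
    simp [insert_erase (max'_mem _ _)]
  · rintro ⟨i, T⟩ ha
    simp only [mem_sigma, mem_powerset] at ha
    have hlt : ∀ b ∈ T, b < i := fun b hb => (mem_filter.1 (ha.2 hb)).2
    simp only [max'_insert_of_forall_lt hlt, erase_insert (fun hi => lt_irrefl i (hlt i hi))]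
  · rintro ⟨S, hS⟩ -
    simp [insert_erase (max'_mem _ _)]

theorem prod_one_sub_eq_sum_powerset {ι R : Type*} [CommRing R] [DecidableEq ι] (s : Finset ι)
    (f : ι → R) : ∏ i ∈ s, (1 - f i) = ∑ T ∈ s.powerset, (-1) ^ #T * ∏ i ∈ T, f i := by
  simp [prod_sub]

end Finset

theorem stmt_4_general (n : ℕ) (x p : ℕ → ℝ) :
    ∑ i ∈ Finset.Icc 1 n, x i * p i * ∏ j ∈ Finset.Icc 1 (i - 1), (1 - p j)
      = ∑ S ∈ ((Finset.Icc 1 n).powerset.filter (fun S => S.Nonempty)).attach,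
          (-1 : ℝ) ^ (S.1.card - 1) * x (S.1.max' (Finset.mem_filter.mp S.2).2)
            * ∏ i ∈ S.1, p i := by
  rw [sum_attach_nonempty_powerset_eq_sum_max' (Icc 1 n)
    fun S i => (-1 : ℝ) ^ (#S - 1) * x i * ∏ j ∈ S, p j]
  refine sum_congr rfl fun i hi => ?_
  have hbelow : (Icc 1 n).filter (· < i) = Icc 1 (i - 1) := by
    ext j
    simp only [mem_filter, mem_Icc] at hi ⊢
    omega
  rw [hbelow, prod_one_sub_eq_sum_powerset, mul_sum]
  refine sum_congr rfl fun T hT => ?_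
  have hiT : i ∉ T := fun h => by
    have := mem_Icc.1 (mem_powerset.1 hT h)
    omega
  rw [card_insert_of_notMem hiT, prod_insert hiT, Nat.add_sub_cancel]
  ring

/-- Algebraic identity from the proof of the sampling lemma: the value of the
identity permutation equals an inclusion–exclusion-type sum over nonempty
subsets of `{1, …, n}`. -/
theorem stmt_4 (n : ℕ) (hn : 0 < n) (x p : ℕ → ℝ) :
    ∑ i ∈ Finset.Icc 1 n, x i * p i * ∏ j ∈ Finset.Icc 1 (i - 1), (1 - p j)
      = ∑ S ∈ ((Finset.Icc 1 n).powerset.filter (fun S => S.Nonempty)).attach,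
          (-1 : ℝ) ^ (S.1.card - 1) * x (S.1.max' (Finset.mem_filter.mp S.2).2)
            * ∏ i ∈ S.1, p i :=
  stmt_4_general n x p
end

section
/- Let n be a positive integer, let α > 0, let p_1, …, p_n ∈ [0,1], and let q_1, …, q_n ≥ 0 be real numbers with q_i ≤ α · p_i for every i. Suppose Q := ∑_{i=1}^{n} q_i > 0, and set δ := (1 − exp(−Q/α)) / Q. Then there exists a probability distribution w on the permutations π of {1, …, n} (i.e. w(π) ≥ 0 and ∑_π w(π) = 1) such that for every index i, ∑_π w(π) · p_i · ∏_{j : π(j) < π(i)} (1 − p_j) ≥ δ · q_i. -/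
/-!
Write `Pπ(i) = pᵢ ∏_{π j < π i} (1 - pⱼ)`. By the minimax theorem it suffices to beat every
mixed strategy `y` of the adversary with a single order: `δ ∑ yᵢ qᵢ ≤ ∑ yᵢ Pπ(i)`. Scan the
events in decreasing order of `y`. By Abel summation it is then enough that every prefix set `S`
of the order satisfies `δ ∑_S q ≤ 1 - ∏_S (1 - p) = ∑_S Pπ`, and this holds for every set `S`:
since `q ≤ α p` and `1 - p ≤ e^{-p}`, the right side is at least `1 - e^{-x/α}` with
`x = ∑_S q ≤ Q`, and this concave function of `x` lies above its chord `δ x` on `[0, Q]`.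
-/

open Finset Matrix

theorem exists_mem_stdSimplex_forall_le_sum_mul {ι κ : Type*} [Fintype ι] [Fintype κ]
    [Nonempty ι] [Nonempty κ] (A : κ → ι → ℝ) (b : ι → ℝ)
    (h : ∀ y ∈ stdSimplex ℝ ι, ∃ k, ∑ i, y i * b i ≤ ∑ i, y i * A k i) :
    ∃ w ∈ stdSimplex ℝ κ, ∀ i, b i ≤ ∑ k, w k * A k i := by
  classical
  set M : Matrix ι κ ℝ := Matrix.of fun i k => A k i - b i
  -- Sion's minimax theorem for the bilinear payoff `y ⬝ᵥ M *ᵥ w` on the two simplices.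
  obtain ⟨y, hy, w, hw, hsaddle⟩ := Sion.exists_isSaddlePointOn (f := fun y w => y ⬝ᵥ M *ᵥ w)
    ⟨_, single_mem_stdSimplex ℝ (Classical.arbitrary ι)⟩ (convex_stdSimplex ℝ ι)
    (isCompact_stdSimplex ℝ ι)
    (fun w _ =>
      (by fun_prop : ContinuousOn (fun y : ι → ℝ => y ⬝ᵥ M *ᵥ w) _).lowerSemicontinuousOn)
    (fun w _ =>
      (((dotProductBilin ℝ ℝ).flip (M *ᵥ w)).convexOn (convex_stdSimplex ℝ ι)).quasiconvexOn)
    (convex_stdSimplex ℝ κ) ⟨_, single_mem_stdSimplex ℝ (Classical.arbitrary κ)⟩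
    (isCompact_stdSimplex ℝ κ)
    (fun y _ =>
      (by fun_prop : ContinuousOn (fun w : κ → ℝ => y ⬝ᵥ M *ᵥ w) _).upperSemicontinuousOn)
    (fun y _ =>
      (((dotProductBilin ℝ ℝ y).comp M.mulVecLin).concaveOn (convex_stdSimplex ℝ κ)).quasiconcaveOn)
  refine ⟨w, hw, fun i => ?_⟩
  obtain ⟨k, hk⟩ := h y hy
  have hik := hsaddle _ (single_mem_stdSimplex ℝ i) _ (single_mem_stdSimplex ℝ k)
  simp only [mulVec_single_one, single_one_dotProduct] at hik
  have hy_k : y ⬝ᵥ M.col k = ∑ i, y i * A k i - ∑ i, y i * b i := by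
    simp [M, dotProduct, mul_sub]
  have hw_i : (M *ᵥ w) i = ∑ k, w k * A k i - b i := by
    simp [M, mulVec, dotProduct, mul_sub, mul_comm, ← Finset.mul_sum, hw.2]
  linarith

theorem exists_perm_antitone_comp_symm {α : Type*} [LinearOrder α] {n : ℕ} (y : Fin n → α) :
    ∃ π : Equiv.Perm (Fin n), Antitone (y ∘ π.symm) :=
  ⟨(Tuple.sort (OrderDual.toDual ∘ y)).symm, fun _ _ hij => by
    simpa using Tuple.monotone_sort (OrderDual.toDual ∘ y) hij⟩

theorem Real.exp_mul_le_one_sub_mul (a : ℝ) {t : ℝ} (ht0 : 0 ≤ t) (ht1 : t ≤ 1) :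
    Real.exp (t * a) ≤ 1 - t * (1 - Real.exp a) := by
  have := convexOn_exp.2 (Set.mem_univ a) (Set.mem_univ 0) ht0 (sub_nonneg.2 ht1) (by ring)
  simp only [smul_eq_mul, mul_zero, add_zero, Real.exp_zero, mul_one] at this
  linarith

theorem Real.prod_one_sub_le_exp_neg_sum {ι : Type*} {s : Finset ι} {p : ι → ℝ}
    (hp : ∀ i ∈ s, p i ≤ 1) : ∏ i ∈ s, (1 - p i) ≤ Real.exp (-∑ i ∈ s, p i) :=
  calc ∏ i ∈ s, (1 - p i) ≤ ∏ i ∈ s, Real.exp (-p i) :=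
        prod_le_prod (fun i hi => sub_nonneg.2 (hp i hi)) fun i _ => Real.one_sub_le_exp_neg _
    _ = Real.exp (-∑ i ∈ s, p i) := by rw [← sum_neg_distrib, Real.exp_sum]

theorem mul_sum_le_one_sub_prod {ι : Type*} [Fintype ι] {α : ℝ} {p q : ι → ℝ} (hα : 0 < α)
    (hp : ∀ i, p i ≤ 1) (hq : ∀ i, 0 ≤ q i) (hqp : ∀ i, q i ≤ α * p i) (hQ : 0 < ∑ i, q i)
    (s : Finset ι) :
    (1 - Real.exp (-(∑ j, q j) / α)) / (∑ j, q j) * ∑ i ∈ s, q i ≤ 1 - ∏ i ∈ s, (1 - p i) := by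
  set Q := ∑ j, q j
  set x := ∑ i ∈ s, q i
  have hx0 : 0 ≤ x := sum_nonneg fun i _ => hq i
  have hxQ : x ≤ Q := sum_le_univ_sum_of_nonneg hq
  have hxp : x / α ≤ ∑ i ∈ s, p i := by
    rw [div_le_iff₀' hα, mul_sum]
    exact sum_le_sum fun i _ => hqp i
  have chord := Real.exp_mul_le_one_sub_mul (-Q / α) (div_nonneg hx0 hQ.le) ((div_le_one hQ).2 hxQ)
  have hexp : x / Q * (-Q / α) = -(x / α) := by field_simp
  rw [hexp] at chord
  calc (1 - Real.exp (-Q / α)) / Q * x = x / Q * (1 - Real.exp (-Q / α)) := by ring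
    _ ≤ 1 - Real.exp (-(x / α)) := by linarith
    _ ≤ 1 - Real.exp (-∑ i ∈ s, p i) := by gcongr
    _ ≤ 1 - ∏ i ∈ s, (1 - p i) := by
      linarith [Real.prod_one_sub_le_exp_neg_sum fun i (_ : i ∈ s) => hp i]

section EarliestEvent

variable {ι β : Type*} [LinearOrder β] (p : ι → ℝ) (r : ι → β)

def earliestProb (s : Finset ι) (i : ι) : ℝ :=
  p i * ∏ j ∈ s with r j < r i, (1 - p j)

variable [DecidableEq ι] {p r}

theorem earliestProb_insert_of_le {s : Finset ι} {a i : ι} (hi : r i ≤ r a) :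
    earliestProb p r (insert a s) i = earliestProb p r s i := by
  simp [earliestProb, filter_insert, not_lt.2 hi]

theorem earliestProb_insert_self (hr : Function.Injective r) {s : Finset ι} {a : ι} (ha : a ∉ s)
    (hs : ∀ x ∈ s, r x ≤ r a) : earliestProb p r (insert a s) a = p a * ∏ j ∈ s, (1 - p j) := by
  have hfilter : {j ∈ insert a s | r j < r a} = s := by
    rw [filter_insert, if_neg (lt_irrefl _), filter_true_of_mem]
    exact fun x hx => (hs x hx).lt_of_ne (hr.ne (ne_of_mem_of_not_mem hx ha))
  rw [earliestProb, hfilter]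

theorem mul_sum_le_sum_mul_earliestProb (hr : Function.Injective r) {q : ι → ℝ} {δ : ℝ}
    (hδ : ∀ s : Finset ι, δ * ∑ i ∈ s, q i ≤ 1 - ∏ i ∈ s, (1 - p i))
    {y : ι → ℝ} (hy0 : ∀ i, 0 ≤ y i) (hy : ∀ i j, r i ≤ r j → y j ≤ y i) (s : Finset ι) :
    δ * ∑ i ∈ s, y i * q i ≤ ∑ i ∈ s, y i * earliestProb p r s i := by
  -- Abel summation, adding the elements in increasing `r`; `c` bounds the weights seen so far.
  suffices key : ∀ c, (∀ i ∈ s, c ≤ y i) →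
      c * (1 - ∏ i ∈ s, (1 - p i) - δ * ∑ i ∈ s, q i)
        ≤ ∑ i ∈ s, y i * (earliestProb p r s i - δ * q i) by
    calc δ * ∑ i ∈ s, y i * q i = ∑ i ∈ s, y i * (δ * q i) := by
          simp only [mul_sum, mul_left_comm]
      _ ≤ ∑ i ∈ s, y i * earliestProb p r s i := by
          simpa only [zero_mul, mul_sub, sum_sub_distrib, sub_zero, sub_nonneg]
            using key 0 fun i _ => hy0 i
  induction s using Finset.induction_on_max_value r with
  | empty => simp
  | insert a s ha hs ih =>
    intro c hc
    have ih' := ih (y a) fun i hi => hy _ _ (hs i hi)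
    have hgap := hδ (insert a s)
    have hprefix : ∑ i ∈ s, y i * (earliestProb p r (insert a s) i - δ * q i)
        = ∑ i ∈ s, y i * (earliestProb p r s i - δ * q i) :=
      sum_congr rfl fun i hi => by rw [earliestProb_insert_of_le (hs i hi)]
    rw [sum_insert ha, prod_insert ha, sum_insert ha, earliestProb_insert_self hr ha hs, hprefix]
    rw [sum_insert ha, prod_insert ha] at hgap
    calc c * (1 - (1 - p a) * ∏ i ∈ s, (1 - p i) - δ * (q a + ∑ i ∈ s, q i))
        ≤ y a * (1 - (1 - p a) * ∏ i ∈ s, (1 - p i) - δ * (q a + ∑ i ∈ s, q i)) :=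
          mul_le_mul_of_nonneg_right (hc a (mem_insert_self a s)) (by linarith)
      _ = y a * (1 - ∏ i ∈ s, (1 - p i) - δ * ∑ i ∈ s, q i)
          + y a * (p a * ∏ i ∈ s, (1 - p i) - δ * q a) := by ring
      _ ≤ _ := by linarith

end EarliestEvent

/-- **Corollary 1.** If each target `q i` is at most `α` times the
corresponding probability `p i`, then a randomized scanning order guarantees
that each event `i` is the earliest occurring one with probability at least
`δ · q i`, where `δ = (1 - exp (-(∑ q)/α)) / (∑ q)`. -/
theorem stmt_6 (n : ℕ) (hn : 0 < n) (α : ℝ) (hα : 0 < α) (p q : Fin n → ℝ)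
    (hp : ∀ i, p i ∈ Set.Icc (0 : ℝ) 1) (hq : ∀ i, 0 ≤ q i)
    (hqp : ∀ i, q i ≤ α * p i) (hQ : 0 < ∑ i, q i) :
    ∃ w : Equiv.Perm (Fin n) → ℝ,
      (∀ π, 0 ≤ w π) ∧ (∑ π : Equiv.Perm (Fin n), w π = 1) ∧
      ∀ i : Fin n,
        (1 - Real.exp (-(∑ j, q j) / α)) / (∑ j, q j) * q i
          ≤ ∑ π : Equiv.Perm (Fin n),
              w π * (p i * ∏ j ∈ Finset.univ.filter (fun j => π j < π i), (1 - p j)) := by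
  have : Nonempty (Fin n) := ⟨⟨0, hn⟩⟩
  set δ := (1 - Real.exp (-(∑ j, q j) / α)) / (∑ j, q j)
  have hδ := mul_sum_le_one_sub_prod hα (fun i => (hp i).2) hq hqp hQ
  obtain ⟨w, hw, hwi⟩ := exists_mem_stdSimplex_forall_le_sum_mul
    (fun (π : Equiv.Perm (Fin n)) i => earliestProb p π univ i) (fun i => δ * q i) fun y hy => by
      obtain ⟨π, hπ⟩ := exists_perm_antitone_comp_symm y
      refine ⟨π, ?_⟩
      calc ∑ i, y i * (δ * q i) = δ * ∑ i, y i * q i := by simp only [mul_sum, mul_left_comm]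
        _ ≤ _ := mul_sum_le_sum_mul_earliestProb π.injective hδ hy.1
              (fun i j hij => by simpa using hπ hij) univ
  exact ⟨w, hw.1, hw.2, hwi⟩
end

section
/- Let n be a positive integer, let p_1, …, p_n be real numbers with 0 < p_i < 1 for all i, and let r_1, …, r_n ≥ 0 be real numbers sorted in decreasing order of the ratios r_i/p_i, i.e. r_1/p_1 ≥ r_2/p_2 ≥ … ≥ r_n/p_n. Define f(S) := ∑_{i∈S} r_i + ∏_{i∈S} (1 − p_i) for S ⊆ {1, …, n} (with the empty product equal to 1). Then there exists k ∈ {0, 1, …, n} such that f({1, 2, …, k}) ≥ f(S) for every subset S ⊆ {1, …, n}; that is, the maximum of f over all subsets is attained at a prefix set. -/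
/-!
Among the maximizers of `f = sumAddProdOneSub r p`, take one, `S`, of largest cardinality; it is a prefix as soon as
it is a lower set. If `j ∈ S` and `i < j` were missing from `S`, write `P = ∏_{S} (1 - p)`.
Inserting `i` changes `f` by `r i - p i * P`, so maximality of the cardinality forces
`r i < p i * P`. Removing `j` changes `f` by `p j * Q - r j` with `Q = P / (1 - p j) ≥ P`, and
`r j / p j ≤ r i / p i < P ≤ Q` makes this strictly positive, contradicting maximality of `f S`.
-/

open Finset

section SumAddProdOneSub

variable {ι R : Type*}

def sumAddProdOneSub [CommRing R] (r p : ι → R) (S : Finset ι) : R :=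
  ∑ i ∈ S, r i + ∏ i ∈ S, (1 - p i)

variable [DecidableEq ι]

theorem sumAddProdOneSub_insert [CommRing R] (r p : ι → R) {S : Finset ι} {i : ι} (hi : i ∉ S) :
    sumAddProdOneSub r p (insert i S) =
      sumAddProdOneSub r p S + (r i - p i * ∏ k ∈ S, (1 - p k)) := by
  simp only [sumAddProdOneSub, sum_insert hi, prod_insert hi]
  ring

variable [Field R] [LinearOrder R] [IsStrictOrderedRing R] {r p : ι → R}

theorem le_sumAddProdOneSub_insert_or_lt_erase (hp₀ : ∀ k, 0 < p k) (hp₁ : ∀ k, p k ≤ 1)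
    {S : Finset ι} {i j : ι} (hi : i ∉ S) (hj : j ∈ S) (hratio : r j / p j ≤ r i / p i) :
    sumAddProdOneSub r p S ≤ sumAddProdOneSub r p (insert i S) ∨
      sumAddProdOneSub r p S < sumAddProdOneSub r p (S.erase j) := by
  set Q := ∏ k ∈ S.erase j, (1 - p k)
  have hQ : 0 ≤ Q := prod_nonneg fun k _ ↦ sub_nonneg.2 (hp₁ k)
  have hPQ : ∏ k ∈ S, (1 - p k) = (1 - p j) * Q := (mul_prod_erase S _ hj).symm
  by_cases hins : p i * ∏ k ∈ S, (1 - p k) ≤ r i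
  · left
    rw [sumAddProdOneSub_insert r p hi]
    linarith
  · right
    have hri : r i / p i < ∏ k ∈ S, (1 - p k) := by
      rw [div_lt_iff₀' (hp₀ i)]
      exact not_le.1 hins
    have hrj : r j < p j * Q := by
      rw [← div_lt_iff₀' (hp₀ j)]
      calc r j / p j ≤ r i / p i := hratio
        _ < (1 - p j) * Q := hPQ ▸ hri
        _ ≤ Q := mul_le_of_le_one_left hQ (sub_le_self 1 (hp₀ j).le)
    have herase := sumAddProdOneSub_insert r p (S := S.erase j) (notMem_erase j S)
    rw [insert_erase hj] at herase
    linarith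

theorem isLowerSet_of_forall_sumAddProdOneSub_le [Preorder ι] (hp₀ : ∀ k, 0 < p k)
    (hp₁ : ∀ k, p k ≤ 1) (hsort : Antitone fun i ↦ r i / p i) {S : Finset ι}
    (hmax : ∀ T, sumAddProdOneSub r p T ≤ sumAddProdOneSub r p S)
    (hcard : ∀ T, sumAddProdOneSub r p T = sumAddProdOneSub r p S → #T ≤ #S) :
    IsLowerSet (S : Set ι) := by
  intro j i hij hj
  by_contra hi
  rcases le_sumAddProdOneSub_insert_or_lt_erase hp₀ hp₁ hi hj (hsort hij) with hins | herase
  · have := hcard _ (le_antisymm (hmax _) hins)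
    rw [card_insert_of_notMem hi] at this
    omega
  · exact (hmax _).not_gt herase

end SumAddProdOneSub

theorem exists_forall_sumAddProdOneSub_le_of_card {ι R : Type*} [Fintype ι] [CommRing R]
    [LinearOrder R] (r p : ι → R) :
    ∃ S : Finset ι, (∀ T, sumAddProdOneSub r p T ≤ sumAddProdOneSub r p S) ∧
      ∀ T, sumAddProdOneSub r p T = sumAddProdOneSub r p S → #T ≤ #S := by
  obtain ⟨S, -, hS⟩ :=
    exists_max_image univ (fun S ↦ toLex (sumAddProdOneSub r p S, #S)) univ_nonempty
  refine ⟨S, fun T ↦ ?_, fun T hT ↦ ?_⟩ <;> have := Prod.Lex.le_iff.1 (hS T (mem_univ T))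
  · exact this.elim le_of_lt (·.1.le)
  · exact this.resolve_left hT.not_lt |>.2

theorem Fin.eq_filter_val_lt_card_of_isLowerSet {n : ℕ} {S : Finset (Fin n)}
    (hS : IsLowerSet (S : Set (Fin n))) : S = univ.filter fun i : Fin n ↦ (i : ℕ) < #S := by
  ext i
  rw [mem_filter, ← Fin.lt_card_filter_univ_iff_apply_of_imp (· ∈ S) fun _ _ h hi ↦ hS h hi]
  simp

theorem stmt_8_general (n : ℕ) (p r : Fin n → ℝ)
    (hp : ∀ i, 0 < p i ∧ p i < 1)
    (hsort : ∀ i j : Fin n, i ≤ j → r j / p j ≤ r i / p i) :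
    ∃ k : ℕ, k ≤ n ∧
      ∀ S : Finset (Fin n),
        ∑ i ∈ S, r i + ∏ i ∈ S, (1 - p i)
          ≤ ∑ i ∈ Finset.univ.filter (fun i : Fin n => (i : ℕ) < k), r i
            + ∏ i ∈ Finset.univ.filter (fun i : Fin n => (i : ℕ) < k), (1 - p i) := by
  obtain ⟨S, hmax, hcard⟩ := exists_forall_sumAddProdOneSub_le_of_card r p
  have hlower : IsLowerSet (S : Set (Fin n)) :=
    isLowerSet_of_forall_sumAddProdOneSub_le (fun k ↦ (hp k).1) (fun k ↦ (hp k).2.le) hsort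
      hmax hcard
  refine ⟨#S, card_le_univ S |>.trans_eq (Fintype.card_fin n), fun T ↦ ?_⟩
  rw [← Fin.eq_filter_val_lt_card_of_isLowerSet hlower]
  exact hmax T

/-- First Claim of the combinatorial algorithm (Appendix B): after sorting the
indices by decreasing ratio `r i / p i`, the quantity
`f S = ∑_{i∈S} r i + ∏_{i∈S} (1 - p i)` is always maximized by a prefix set
`{1, 2, …, k}`. -/
theorem stmt_8 (n : ℕ) (hn : 0 < n) (p r : Fin n → ℝ)
    (hp : ∀ i, 0 < p i ∧ p i < 1) (hr : ∀ i, 0 ≤ r i)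
    (hsort : ∀ i j : Fin n, i ≤ j → r j / p j ≤ r i / p i) :
    ∃ k : ℕ, k ≤ n ∧
      ∀ S : Finset (Fin n),
        ∑ i ∈ S, r i + ∏ i ∈ S, (1 - p i)
          ≤ ∑ i ∈ Finset.univ.filter (fun i : Fin n => (i : ℕ) < k), r i
            + ∏ i ∈ Finset.univ.filter (fun i : Fin n => (i : ℕ) < k), (1 - p i) :=
  stmt_8_general n p r hp hsort
end

section
/- Let n be a positive integer, let p_1, …, p_n be real numbers with 0 < p_i < 1 for all i, let r_1, …, r_n ≥ 0, and define f(S) := ∑_{i∈S} r_i + ∏_{i∈S} (1 − p_i) for S ⊆ {1, …, n}. Suppose S* ⊆ {1, …, n} maximizes f over all subsets, and suppose j₁ ∈ S* and j₂ ∉ S*. Then r_{j₂}/p_{j₂} ≤ r_{j₁}/p_{j₁}. -/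
/-!
Write `P = ∏_{i∈S*} (1 - p i)`. Adding `j₂` to `S*` gains `r j₂` but scales `P` by `1 - p j₂`, so
maximality gives `r j₂ ≤ p j₂ P`. Removing `j₁` loses `r j₁` but divides `P` by `1 - p j₁`, so
maximality gives `p j₁ Q ≤ r j₁` for `Q = ∏_{i∈S*∖{j₁}} (1 - p i)`. Since all factors lie in
`[0, 1]`, `P ≤ Q`, whence `r j₂ / p j₂ ≤ P ≤ Q ≤ r j₁ / p j₁`.
-/

open Finset

section Exchange

variable {ι : Type*} [DecidableEq ι] (r p : ι → ℝ) {S : Finset ι} {j : ι}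

theorem le_mul_prod_of_insert_le (hj : j ∉ S)
    (h : ∑ i ∈ insert j S, r i + ∏ i ∈ insert j S, (1 - p i)
      ≤ ∑ i ∈ S, r i + ∏ i ∈ S, (1 - p i)) :
    r j ≤ p j * ∏ i ∈ S, (1 - p i) := by
  rw [sum_insert hj, prod_insert hj] at h
  linear_combination h

theorem mul_prod_erase_le_of_erase_le (hj : j ∈ S)
    (h : ∑ i ∈ S.erase j, r i + ∏ i ∈ S.erase j, (1 - p i)
      ≤ ∑ i ∈ S, r i + ∏ i ∈ S, (1 - p i)) :
    p j * ∏ i ∈ S.erase j, (1 - p i) ≤ r j := by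
  rw [← add_sum_erase _ _ hj, ← mul_prod_erase _ _ hj] at h
  linear_combination h

end Exchange

theorem stmt_9_general (n : ℕ) (p r : Fin n → ℝ)
    (hp : ∀ i, 0 < p i ∧ p i < 1)
    (Sstar : Finset (Fin n))
    (hmax : ∀ S : Finset (Fin n),
      ∑ i ∈ S, r i + ∏ i ∈ S, (1 - p i)
        ≤ ∑ i ∈ Sstar, r i + ∏ i ∈ Sstar, (1 - p i))
    (j₁ j₂ : Fin n) (hj₁ : j₁ ∈ Sstar) (hj₂ : j₂ ∉ Sstar) :
    r j₂ / p j₂ ≤ r j₁ / p j₁ := by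
  have lower := le_mul_prod_of_insert_le r p hj₂ (hmax _)
  have upper := mul_prod_erase_le_of_erase_le r p hj₁ (hmax _)
  have prod_le_prod_erase : ∏ i ∈ Sstar, (1 - p i) ≤ ∏ i ∈ Sstar.erase j₁, (1 - p i) :=
    prod_le_prod_of_subset_of_le_one (erase_subset _ _)
      (fun i _ ↦ by linarith [(hp i).2]) (fun i _ _ ↦ by linarith [(hp i).1])
  calc r j₂ / p j₂ ≤ ∏ i ∈ Sstar, (1 - p i) := by
        rwa [div_le_iff₀' (hp j₂).1]
    _ ≤ ∏ i ∈ Sstar.erase j₁, (1 - p i) := prod_le_prod_erase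
    _ ≤ r j₁ / p j₁ := by
        rwa [le_div_iff₀' (hp j₁).1]

/-- Exchange inequality from Appendix B: if `S*` maximizes
`f S = ∑_{i∈S} r i + ∏_{i∈S} (1 - p i)`, then any element outside the
maximizer has ratio `r / p` at most that of any element inside it. -/
theorem stmt_9 (n : ℕ) (hn : 0 < n) (p r : Fin n → ℝ)
    (hp : ∀ i, 0 < p i ∧ p i < 1) (hr : ∀ i, 0 ≤ r i)
    (Sstar : Finset (Fin n))
    (hmax : ∀ S : Finset (Fin n),
      ∑ i ∈ S, r i + ∏ i ∈ S, (1 - p i)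
        ≤ ∑ i ∈ Sstar, r i + ∏ i ∈ Sstar, (1 - p i))
    (j₁ j₂ : Fin n) (hj₁ : j₁ ∈ Sstar) (hj₂ : j₂ ∉ Sstar) :
    r j₂ / p j₂ ≤ r j₁ / p j₁ :=
  stmt_9_general n p r hp Sstar hmax j₁ j₂ hj₁ hj₂
end

section
/- Let n be a positive integer, let p_1, …, p_n be real numbers with 0 < p_i < 1 for all i, let r_1, …, r_n ≥ 0, and let w be a probability distribution on the permutations π of {1, …, n} satisfying, for every index i, ∑_π w(π) · p_i · ∏_{j : π(j) < π(i)} (1 − p_j) ≥ r_i. Suppose S₀ ⊆ {1, …, n} is a subset for which the feasibility constraint is tight, i.e. ∑_{i∈S₀} r_i + ∏_{i∈S₀} (1 − p_i) = 1. Then every permutation π with w(π) > 0 places all indices of S₀ before all indices outside S₀; that is, for every i ∈ S₀ and every j ∉ S₀, π(i) < π(j). -/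
/-!
Examine the independent events in the order `π`. The probability that the earliest occurring event
lies in `S`, plus the probability that no event of `S` occurs, is at most `1` (exactly `1` if only
the events of `S` were examined, by telescoping), and strictly less than `1` as soon as an event
outside `S` is examined before an event of `S`. Averaging over `w`, the feasibility constraints
and the tightness for `S₀` rule out the strict case for every `π` in the support of `w`.
-/

open Finset Function

variable {α β R : Type*}

/-- For independent events of probabilities `p i`, examined in the order `f`, the probability
that the first event to occur lies in `s`. -/
def probFirstIn [Fintype α] [CommRing R] [LinearOrder β] (p : α → R) (f : α → β)
    (s : Finset α) : R :=
  ∑ i ∈ s, p i * ∏ j with f j < f i, (1 - p j)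

theorem sum_mul_prod_filter_lt_add_prod_one_sub [CommRing R] [LinearOrder β] {f : α → β}
    (hf : Injective f) (p : α → R) (s : Finset α) :
    ∑ i ∈ s, p i * ∏ j ∈ s with f j < f i, (1 - p j) + ∏ i ∈ s, (1 - p i) = 1 := by
  let : LinearOrder α := LinearOrder.lift' f hf
  rw [prod_one_sub_ordered s p]
  exact add_sub_cancel _ _

section Ordered

variable [Fintype α] [CommRing R] [LinearOrder R] [IsStrictOrderedRing R] [LinearOrder β]
  {p : α → R} {f : α → β} {s : Finset α}

theorem prod_filter_lt_one_sub_le_prod_filter_lt_one_sub (hp0 : ∀ i, 0 ≤ p i)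
    (hp1 : ∀ i, p i ≤ 1) (i : α) :
    ∏ j with f j < f i, (1 - p j) ≤ ∏ j ∈ s with f j < f i, (1 - p j) :=
  prod_le_prod_of_subset_of_le_one (filter_subset_filter _ (subset_univ s))
    (fun j _ => sub_nonneg.2 (hp1 j)) fun j _ _ => sub_le_self _ (hp0 j)

theorem prod_filter_lt_one_sub_lt_prod_filter_lt_one_sub (hp0 : ∀ i, 0 < p i)
    (hp1 : ∀ i, p i < 1) {i j : α} (hj : j ∉ s) (hji : f j < f i) :
    ∏ k with f k < f i, (1 - p k) < ∏ k ∈ s with f k < f i, (1 - p k) := by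
  classical
  have hj' : j ∉ s.filter (f · < f i) := fun h => hj (mem_filter.1 h).1
  calc ∏ k with f k < f i, (1 - p k)
      ≤ ∏ k ∈ insert j (s.filter (f · < f i)), (1 - p k) :=
        prod_le_prod_of_subset_of_le_one
          (insert_subset (mem_filter.2 ⟨mem_univ j, hji⟩) (filter_subset_filter _ (subset_univ s)))
          (fun k _ => sub_nonneg.2 (hp1 k).le) fun k _ _ => sub_le_self _ (hp0 k).le
    _ = (1 - p j) * ∏ k ∈ s with f k < f i, (1 - p k) := prod_insert hj'
    _ < ∏ k ∈ s with f k < f i, (1 - p k) :=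
        mul_lt_of_lt_one_left (prod_pos fun k _ => sub_pos.2 (hp1 k)) (sub_lt_self _ (hp0 j))

theorem probFirstIn_le (hf : Injective f) (hp0 : ∀ i, 0 ≤ p i) (hp1 : ∀ i, p i ≤ 1) :
    probFirstIn p f s ≤ 1 - ∏ i ∈ s, (1 - p i) := by
  have := sum_mul_prod_filter_lt_add_prod_one_sub hf p s
  have : probFirstIn p f s ≤ ∑ i ∈ s, p i * ∏ j ∈ s with f j < f i, (1 - p j) :=
    sum_le_sum fun i _ =>
      mul_le_mul_of_nonneg_left (prod_filter_lt_one_sub_le_prod_filter_lt_one_sub hp0 hp1 i) (hp0 i)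
  linarith

theorem probFirstIn_lt (hf : Injective f) (hp0 : ∀ i, 0 < p i) (hp1 : ∀ i, p i < 1)
    {i j : α} (hi : i ∈ s) (hj : j ∉ s) (hji : f j < f i) :
    probFirstIn p f s < 1 - ∏ i ∈ s, (1 - p i) := by
  have := sum_mul_prod_filter_lt_add_prod_one_sub hf p s
  have : probFirstIn p f s < ∑ i ∈ s, p i * ∏ j ∈ s with f j < f i, (1 - p j) :=
    sum_lt_sum (fun k _ => mul_le_mul_of_nonneg_left
        (prod_filter_lt_one_sub_le_prod_filter_lt_one_sub (fun k => (hp0 k).le)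
          (fun k => (hp1 k).le) k) (hp0 k).le)
      ⟨i, hi, mul_lt_mul_of_pos_left
        (prod_filter_lt_one_sub_lt_prod_filter_lt_one_sub hp0 hp1 hj hji) (hp0 i)⟩
  linarith

end Ordered

theorem sum_mul_lt_of_forall_le_of_lt [LinearOrder R] [Semiring R] [IsStrictOrderedRing R]
    {s : Finset α} {w g : α → R} {c : R} (hw : ∀ k ∈ s, 0 ≤ w k) (hw1 : ∑ k ∈ s, w k = 1)
    (hg : ∀ k ∈ s, g k ≤ c) {i : α} (hi : i ∈ s) (hwi : 0 < w i) (hgi : g i < c) :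
    ∑ k ∈ s, w k * g k < c :=
  calc ∑ k ∈ s, w k * g k < ∑ k ∈ s, w k * c :=
        sum_lt_sum (fun k hk => mul_le_mul_of_nonneg_left (hg k hk) (hw k hk))
          ⟨i, hi, mul_lt_mul_of_pos_left hgi hwi⟩
    _ = c := by rw [← sum_mul, hw1, one_mul]

theorem stmt_10_general (n : ℕ) (p r : Fin n → ℝ)
    (hp : ∀ i, 0 < p i ∧ p i < 1)
    (w : Equiv.Perm (Fin n) → ℝ) (hw : ∀ π, 0 ≤ w π)
    (hw1 : ∑ π : Equiv.Perm (Fin n), w π = 1)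
    (hfeas : ∀ i : Fin n,
      r i ≤ ∑ π : Equiv.Perm (Fin n),
        w π * (p i * ∏ j ∈ Finset.univ.filter (fun j => π j < π i), (1 - p j)))
    (S₀ : Finset (Fin n))
    (htight : ∑ i ∈ S₀, r i + ∏ i ∈ S₀, (1 - p i) = 1) :
    ∀ π : Equiv.Perm (Fin n), 0 < w π →
      ∀ i ∈ S₀, ∀ j ∉ S₀, π i < π j := by
  intro π hwπ i hi j hj
  by_contra hij
  have hji : π j < π i :=
    (not_lt.1 hij).lt_of_ne (π.injective.ne (ne_of_mem_of_not_mem hi hj)).symm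
  have hp0 : ∀ k, 0 < p k := fun k => (hp k).1
  have hp1 : ∀ k, p k < 1 := fun k => (hp k).2
  have hfeas_S₀ : 1 - ∏ i ∈ S₀, (1 - p i) ≤ ∑ σ, w σ * probFirstIn p σ S₀ :=
    calc 1 - ∏ i ∈ S₀, (1 - p i) = ∑ i ∈ S₀, r i := by linarith
      _ ≤ ∑ i ∈ S₀, ∑ σ : Equiv.Perm (Fin n), w σ * (p i * ∏ j with σ j < σ i, (1 - p j)) :=
        sum_le_sum fun i _ => hfeas i
      _ = ∑ σ, w σ * probFirstIn p σ S₀ := by simp only [probFirstIn, mul_sum]; exact sum_comm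
  have := sum_mul_lt_of_forall_le_of_lt (fun σ _ => hw σ) hw1
    (fun σ _ => probFirstIn_le σ.injective (fun k => (hp0 k).le) fun k => (hp1 k).le)
    (mem_univ π) hwπ (probFirstIn_lt π.injective hp0 hp1 hi hj hji)
  linarith

/-- Second Claim of the combinatorial algorithm (Appendix B): if the
feasibility constraint is tight for `S₀`, i.e.
`∑_{i∈S₀} r i + ∏_{i∈S₀} (1 - p i) = 1`, then every permutation in the support
of a feasible distribution `w` places all indices of `S₀` before all indices
outside `S₀`. -/
theorem stmt_10 (n : ℕ) (hn : 0 < n) (p r : Fin n → ℝ)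
    (hp : ∀ i, 0 < p i ∧ p i < 1) (hr : ∀ i, 0 ≤ r i)
    (w : Equiv.Perm (Fin n) → ℝ) (hw : ∀ π, 0 ≤ w π)
    (hw1 : ∑ π : Equiv.Perm (Fin n), w π = 1)
    (hfeas : ∀ i : Fin n,
      r i ≤ ∑ π : Equiv.Perm (Fin n),
        w π * (p i * ∏ j ∈ Finset.univ.filter (fun j => π j < π i), (1 - p j)))
    (S₀ : Finset (Fin n))
    (htight : ∑ i ∈ S₀, r i + ∏ i ∈ S₀, (1 - p i) = 1) :
    ∀ π : Equiv.Perm (Fin n), 0 < w π →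
      ∀ i ∈ S₀, ∀ j ∉ S₀, π i < π j :=
  stmt_10_general n p r hp w hw hw1 hfeas S₀ htight
end

section
/- Let n be a positive integer, let p_1, …, p_n be real numbers with 0 < p_i < 1 for all i, let r_1, …, r_n ≥ 0 satisfy r_1/p_1 ≥ r_2/p_2 ≥ … ≥ r_n/p_n, and let 0 ≤ z < 1. Define r′_j := (r_j − z · p_j · ∏_{i>j} (1 − p_i)) / (1 − z) for each j. Then for every i ∈ {1, …, n−1}, r′_i/p_i ≥ r′_{i+1}/p_{i+1}; that is, the transformation r ↦ r′ preserves the decreasing order of the ratios r_j/p_j. -/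
/-!
Dividing by `p j` turns the transformation into `r j / p j ↦ (r j / p j - z Q j) / (1 - z)`,
where `Q j = ∏_{i > j} (1 - p i)`. Since every factor `1 - p i` lies in `[0, 1]`, the tail
products `Q j` increase with `j`, so the subtracted term `z Q j` only widens the gaps between
the (already decreasing) ratios, and the positive factor `1 / (1 - z)` preserves the order.
-/

open Finset

namespace SlackRemoval

variable {ι : Type*} [Fintype ι] [LinearOrder ι]

/-- The target `r′ j` after considering the events in decreasing order of index with
probability `z`. -/
noncomputable def slackRemoved (p r : ι → ℝ) (z : ℝ) (j : ι) : ℝ :=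
  (r j - z * p j * ∏ i ∈ univ.filter (fun i => j < i), (1 - p i)) / (1 - z)

theorem prod_filter_lt_le_prod_filter_lt {R : Type*} [CommSemiring R] [PartialOrder R]
    [IsOrderedRing R] {f : ι → R} (hf0 : ∀ k, 0 ≤ f k) (hf1 : ∀ k, f k ≤ 1) {i j : ι}
    (hij : i ≤ j) :
    ∏ k ∈ univ.filter (fun k => i < k), f k ≤ ∏ k ∈ univ.filter (fun k => j < k), f k :=
  prod_anti_set_of_le_one hf0 hf1 fun _ hk => by
    simp only [mem_filter, mem_univ, true_and] at hk ⊢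
    exact hij.trans_lt hk

theorem slackRemoved_div (p r : ι → ℝ) (z : ℝ) {j : ι} (hpj : p j ≠ 0) :
    slackRemoved p r z j / p j =
      (r j / p j - z * ∏ i ∈ univ.filter (fun i => j < i), (1 - p i)) / (1 - z) := by
  rw [slackRemoved, div_right_comm, sub_div, mul_right_comm, mul_div_cancel_right₀ _ hpj]

theorem slackRemoved_div_antitone {p r : ι → ℝ} (hp : ∀ i, 0 < p i ∧ p i < 1)
    (hsort : ∀ i j : ι, i ≤ j → r j / p j ≤ r i / p i) {z : ℝ} (hz0 : 0 ≤ z) (hz1 : z < 1)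
    {i j : ι} (hij : i ≤ j) :
    slackRemoved p r z j / p j ≤ slackRemoved p r z i / p i := by
  have htail : ∏ k ∈ univ.filter (fun k => i < k), (1 - p k) ≤
      ∏ k ∈ univ.filter (fun k => j < k), (1 - p k) :=
    prod_filter_lt_le_prod_filter_lt (fun k => by linarith [hp k]) (fun k => by linarith [hp k])
      hij
  rw [slackRemoved_div p r z (hp j).1.ne', slackRemoved_div p r z (hp i).1.ne']
  exact div_le_div_of_nonneg_right
    (sub_le_sub (hsort i j hij) (mul_le_mul_of_nonneg_left htail hz0)) (by linarith)

end SlackRemoval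

theorem stmt_11_general (n : ℕ) (p r : Fin n → ℝ)
    (hp : ∀ i, 0 < p i ∧ p i < 1)
    (hsort : ∀ i j : Fin n, i ≤ j → r j / p j ≤ r i / p i)
    (z : ℝ) (hz0 : 0 ≤ z) (hz1 : z < 1)
    (r' : Fin n → ℝ)
    (hr' : ∀ j : Fin n,
      r' j = (r j - z * p j * ∏ i ∈ Finset.univ.filter (fun i => j < i), (1 - p i))
              / (1 - z)) :
    ∀ (i : Fin n) (h : (i : ℕ) + 1 < n),
      r' ⟨(i : ℕ) + 1, h⟩ / p ⟨(i : ℕ) + 1, h⟩ ≤ r' i / p i := by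
  obtain rfl : r' = SlackRemoval.slackRemoved p r z := funext hr'
  intro i h
  exact SlackRemoval.slackRemoved_div_antitone hp hsort hz0 hz1 (Fin.le_def.mpr (Nat.le_succ i))

/-- Correctness of the slack-removal Step 1 of the combinatorial algorithm
(Appendix B): the transformation
`r j ↦ r′ j = (r j - z · p j · ∏_{i>j} (1 - p i)) / (1 - z)` preserves the
decreasing order of the ratios `r j / p j`. -/
theorem stmt_11 (n : ℕ) (hn : 0 < n) (p r : Fin n → ℝ)
    (hp : ∀ i, 0 < p i ∧ p i < 1) (hr : ∀ i, 0 ≤ r i)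
    (hsort : ∀ i j : Fin n, i ≤ j → r j / p j ≤ r i / p i)
    (z : ℝ) (hz0 : 0 ≤ z) (hz1 : z < 1)
    (r' : Fin n → ℝ)
    (hr' : ∀ j : Fin n,
      r' j = (r j - z * p j * ∏ i ∈ Finset.univ.filter (fun i => j < i), (1 - p i))
              / (1 - z)) :
    ∀ (i : Fin n) (h : (i : ℕ) + 1 < n),
      r' ⟨(i : ℕ) + 1, h⟩ / p ⟨(i : ℕ) + 1, h⟩ ≤ r' i / p i :=
  stmt_11_general n p r hp hsort z hz0 hz1 r' hr'
end
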